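/- Let λ be a complex number with Im √λ > 0. For any smooth compactly supported function f on [0,∞), the function u(x) = (i/(2√λ)) ∫₀^∞ (e^{i√λ(x+s)} + e^{i√λ|x−s|}) f(s) ds is the unique L² solution of −u'' − λu = f with u'(0) = 0. -/

import Mathlib

open MeasureTheory Complex Set Filter Topology

lemma aux_const_Ioi (φ : ℝ → ℂ) (h : ∀ x ∈ Ioi (0:ℝ), HasDerivAt φ 0 x) :
    ∀ x ∈ Ioi (0:ℝ), ∀ y ∈ Ioi (0:ℝ), φ x = φ y := by
  have key : ∀ a b : ℝ, 0 < a → a ≤ b → φ b = φ a := by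
    intro a b ha hab
    have hcont : ContinuousOn φ (Icc a b) := fun t ht =>
      ((h t (lt_of_lt_of_le ha ht.1)).continuousAt).continuousWithinAt
    have hder : ∀ t ∈ Ico a b, HasDerivWithinAt φ 0 (Ici t) t := fun t ht =>
      (h t (lt_of_lt_of_le ha ht.1)).hasDerivWithinAt
    exact constant_of_has_deriv_right_zero hcont hder b ⟨hab, le_rfl⟩
  intro x hx y hy
  rcases le_total x y with hxy | hxy
  · exact (key x y hx hxy).symm
  · exact key y x hy hxy

lemma aux_norm_exp (z : ℂ) (x : ℝ) :
    ‖Complex.exp (Complex.I * z * x)‖ = Real.exp (-(z.im * x)) := by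
  rw [Complex.norm_exp]
  congr 1
  simp [Complex.mul_re, Complex.mul_im]

lemma aux_memLp_exp (z : ℂ) (hz : 0 < z.im) (a : ℂ) :
    MemLp (fun x : ℝ => a * Complex.exp (Complex.I * z * x)) 2
      (volume.restrict (Ici (0:ℝ))) := by
  have hmeas : AEStronglyMeasurable (fun x : ℝ => a * Complex.exp (Complex.I * z * x))
      (volume.restrict (Ici (0:ℝ))) := by
    exact (Continuous.aestronglyMeasurable (by continuity)).restrict
  rw [memLp_two_iff_integrable_sq_norm hmeas]
  have : (fun x : ℝ => ‖a * Complex.exp (Complex.I * z * x)‖ ^ 2)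
      = fun x : ℝ => ‖a‖^2 * Real.exp (-(2*z.im) * x) := by
    funext x
    rw [norm_mul, aux_norm_exp, mul_pow, ← Real.exp_nat_mul]
    ring_nf
  rw [this]
  have h1 : IntegrableOn (fun x : ℝ => Real.exp (-(2*z.im) * x)) (Ioi (0:ℝ)) :=
    exp_neg_integrableOn_Ioi 0 (by linarith)
  have h2 : IntegrableOn (fun x : ℝ => Real.exp (-(2*z.im) * x)) (Ici (0:ℝ)) := by
    rwa [integrableOn_Ici_iff_integrableOn_Ioi]
  exact h2.const_mul _

lemma aux_not_memLp (z : ℂ) (hz : 0 < z.im) (a : ℂ)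
    (h : MemLp (fun x : ℝ => a * Complex.exp (-(Complex.I * z) * x)) 2
      (volume.restrict (Ici (0:ℝ)))) : a = 0 := by
  by_contra ha
  have hmeas : AEStronglyMeasurable (fun x : ℝ => a * Complex.exp (-(Complex.I * z) * x))
      (volume.restrict (Ici (0:ℝ))) :=
    (Continuous.aestronglyMeasurable (by continuity)).restrict
  rw [memLp_two_iff_integrable_sq_norm hmeas] at h
  have hε : (0:ℝ) < ‖a‖^2 := pow_pos (norm_pos_iff.mpr ha) 2
  have hfin := h.measure_ge_lt_top hε
  have hsub : Ici (0:ℝ) ⊆ {x : ℝ | ‖a‖^2 ≤ ‖a * Complex.exp (-(Complex.I * z) * x)‖ ^ 2} := by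
    intro x hx
    have hn : ‖Complex.exp (-(Complex.I * z) * (x:ℂ))‖ = Real.exp (z.im * x) := by
      rw [Complex.norm_exp]
      congr 1
      simp [Complex.mul_re, Complex.mul_im]
    have h1 : (1:ℝ) ≤ Real.exp (z.im * x) :=
      Real.one_le_exp (mul_nonneg hz.le hx)
    simp only [Set.mem_setOf_eq, norm_mul, hn, mul_pow]
    nlinarith [sq_nonneg (Real.exp (z.im*x) - 1)]
  have h2 := measure_mono (μ := volume.restrict (Ici (0:ℝ))) hsub
  rw [Measure.restrict_apply_self] at h2
  have hIci : (volume (Ici (0:ℝ))) = ⊤ := by simp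
  rw [hIci] at h2
  exact hfin.ne (top_le_iff.mp h2)

noncomputable def auxA (z : ℂ) (f : ℝ → ℂ) (x : ℝ) : ℂ :=
  ∫ t in (0:ℝ)..x, Complex.exp (-(Complex.I*z)*t) * f t

noncomputable def auxB (z : ℂ) (f : ℝ → ℂ) (x : ℝ) : ℂ :=
  ∫ t in Ioi x, Complex.exp (Complex.I*z*t) * f t

noncomputable def auxU (z : ℂ) (f : ℝ → ℂ) (x : ℝ) : ℂ :=
  (Complex.I/(2*z)) * (Complex.exp (Complex.I*z*x) * (auxB z f 0 + auxA z f x)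
    + Complex.exp (-(Complex.I*z)*x) * auxB z f x)

noncomputable def auxV (z : ℂ) (f : ℝ → ℂ) (x : ℝ) : ℂ :=
  (Complex.I/(2*z)) * (Complex.I*z) * (Complex.exp (Complex.I*z*x) * (auxB z f 0 + auxA z f x)
    - Complex.exp (-(Complex.I*z)*x) * auxB z f x)

lemma aux_cont_ker (w : ℂ) (f : ℝ → ℂ) (hf : Continuous f) :
    Continuous (fun t : ℝ => Complex.exp (w*t) * f t) :=
  (Complex.continuous_exp.comp (continuous_const.mul Complex.continuous_ofReal)).mul hf

lemma aux_int_ker (w : ℂ) (f : ℝ → ℂ) (hf : Continuous f) (hs : HasCompactSupport f) :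
    Integrable (fun t : ℝ => Complex.exp (w*t) * f t) := by
  exact (aux_cont_ker w f hf).integrable_of_hasCompactSupport (hs.mul_left)

lemma aux_B_eq (z : ℂ) (f : ℝ → ℂ) (hf : Continuous f) (hs : HasCompactSupport f) (x : ℝ) :
    auxB z f x = auxB z f 0 - ∫ t in (0:ℝ)..x, Complex.exp (Complex.I*z*t) * f t := by
  have hint := aux_int_ker (Complex.I*z) f hf hs
  rcases le_total 0 x with hx | hx
  · rw [intervalIntegral.integral_of_le hx]
    have hsplit : (Ioc (0:ℝ) x) ∪ Ioi x = Ioi (0:ℝ) := Ioc_union_Ioi_eq_Ioi hx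
    have := setIntegral_union (Ioc_disjoint_Ioi le_rfl) measurableSet_Ioi
      (hint.integrableOn (s := Ioc 0 x)) (hint.integrableOn (s := Ioi x))
    rw [hsplit] at this
    unfold auxB
    rw [this]; ring
  · rw [intervalIntegral.integral_of_ge hx]
    have hsplit : (Ioc x (0:ℝ)) ∪ Ioi 0 = Ioi x := Ioc_union_Ioi_eq_Ioi hx
    have := setIntegral_union (Ioc_disjoint_Ioi le_rfl) measurableSet_Ioi
      (hint.integrableOn (s := Ioc x 0)) (hint.integrableOn (s := Ioi 0))
    rw [hsplit] at this
    unfold auxB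
    rw [this]; ring

lemma aux_A_deriv (z : ℂ) (f : ℝ → ℂ) (hf : Continuous f) (x : ℝ) :
    HasDerivAt (auxA z f) (Complex.exp (-(Complex.I*z)*x) * f x) x := by
  exact intervalIntegral.integral_hasDerivAt_right
    ((aux_cont_ker _ f hf).intervalIntegrable _ _)
    ((aux_cont_ker _ f hf).stronglyMeasurableAtFilter _ _)
    (aux_cont_ker _ f hf).continuousAt

lemma aux_B_deriv (z : ℂ) (f : ℝ → ℂ) (hf : Continuous f) (hs : HasCompactSupport f) (x : ℝ) :
    HasDerivAt (auxB z f) (-(Complex.exp (Complex.I*z*x) * f x)) x := by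
  have heq : auxB z f = fun y => auxB z f 0 - ∫ t in (0:ℝ)..y, Complex.exp (Complex.I*z*t) * f t :=
    funext (aux_B_eq z f hf hs)
  rw [heq]
  have h2 : HasDerivAt (fun y : ℝ => ∫ t in (0:ℝ)..y, Complex.exp (Complex.I*z*t) * f t)
      (Complex.exp (Complex.I*z*x) * f x) x :=
    intervalIntegral.integral_hasDerivAt_right
      ((aux_cont_ker _ f hf).intervalIntegrable _ _)
      ((aux_cont_ker _ f hf).stronglyMeasurableAtFilter _ _)
      (aux_cont_ker _ f hf).continuousAt
  have h3 := (hasDerivAt_const x (auxB z f 0)).sub h2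
  rw [zero_sub] at h3
  exact h3

lemma aux_exp_deriv (w : ℂ) (x : ℝ) :
    HasDerivAt (fun y : ℝ => Complex.exp (w*y)) (w * Complex.exp (w*x)) x := by
  have h1 : HasDerivAt (fun y : ℝ => (y:ℂ)) 1 x := Complex.ofRealCLM.hasDerivAt
  have h2 := (h1.const_mul w).cexp
  simpa [mul_comm] using h2

lemma aux_U_deriv (z : ℂ) (f : ℝ → ℂ) (hf : Continuous f) (hs : HasCompactSupport f) (x : ℝ) :
    HasDerivAt (auxU z f) (auxV z f x) x := by
  have hA := aux_A_deriv z f hf x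
  have hB := aux_B_deriv z f hf hs x
  have he1 := aux_exp_deriv (Complex.I*z) x
  have he2 := aux_exp_deriv (-(Complex.I*z)) x
  have h1 : HasDerivAt (fun y : ℝ => Complex.exp (Complex.I*z*y) * (auxB z f 0 + auxA z f y))
      ((Complex.I*z) * Complex.exp (Complex.I*z*x) * (auxB z f 0 + auxA z f x)
        + Complex.exp (Complex.I*z*x) * (Complex.exp (-(Complex.I*z)*x) * f x)) x := by
    have h := he1.mul ((hasDerivAt_const x (auxB z f 0)).add hA)
    rw [zero_add] at h
    exact h
  have h2 : HasDerivAt (fun y : ℝ => Complex.exp (-(Complex.I*z)*y) * auxB z f y)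
      ((-(Complex.I*z)) * Complex.exp (-(Complex.I*z)*x) * auxB z f x
        + Complex.exp (-(Complex.I*z)*x) * (-(Complex.exp (Complex.I*z*x) * f x))) x :=
    he2.mul hB
  have h3 := ((h1.add h2).const_mul (Complex.I/(2*z)))
  have hcancel : Complex.exp (Complex.I*z*x) * Complex.exp (-(Complex.I*z)*x) = 1 := by
    rw [← Complex.exp_add]; ring_nf; exact Complex.exp_zero
  have : HasDerivAt (auxU z f) _ x := h3
  convert this using 1
  unfold auxV
  field_simp
  ring_nf

lemma aux_V_deriv (z : ℂ) (hz : z ≠ 0) (f : ℝ → ℂ) (hf : Continuous f)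
    (hs : HasCompactSupport f) (x : ℝ) :
    HasDerivAt (auxV z f) (-z^2 * auxU z f x - f x) x := by
  have hA := aux_A_deriv z f hf x
  have hB := aux_B_deriv z f hf hs x
  have he1 := aux_exp_deriv (Complex.I*z) x
  have he2 := aux_exp_deriv (-(Complex.I*z)) x
  have h1 : HasDerivAt (fun y : ℝ => Complex.exp (Complex.I*z*y) * (auxB z f 0 + auxA z f y))
      ((Complex.I*z) * Complex.exp (Complex.I*z*x) * (auxB z f 0 + auxA z f x)
        + Complex.exp (Complex.I*z*x) * (Complex.exp (-(Complex.I*z)*x) * f x)) x := by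
    have h := he1.mul ((hasDerivAt_const x (auxB z f 0)).add hA)
    rw [zero_add] at h
    exact h
  have h2 : HasDerivAt (fun y : ℝ => Complex.exp (-(Complex.I*z)*y) * auxB z f y)
      ((-(Complex.I*z)) * Complex.exp (-(Complex.I*z)*x) * auxB z f x
        + Complex.exp (-(Complex.I*z)*x) * (-(Complex.exp (Complex.I*z*x) * f x))) x :=
    he2.mul hB
  have h3 := ((h1.sub h2).const_mul ((Complex.I/(2*z)) * (Complex.I*z)))
  have : HasDerivAt (auxV z f) _ x := h3
  convert this using 1
  unfold auxU
  have hI : Complex.I * Complex.I = -1 := Complex.I_mul_I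
  field_simp
  ring_nf
  have e2 : Complex.I^2 = -1 := Complex.I_sq
  have e3 : Complex.I^3 = -Complex.I := by rw [pow_succ, e2]; ring
  have he : Complex.exp (z*Complex.I*x) * Complex.exp (-(z*Complex.I*x)) = 1 := by
    rw [← Complex.exp_add]; simp
  simp only [e2, e3]
  linear_combination (2*f x) * he

lemma aux_cont_absker (z : ℂ) (f : ℝ → ℂ) (hf : Continuous f) (x : ℝ) :
    Continuous (fun s : ℝ => Complex.exp (Complex.I * z * (|x - s| : ℝ)) * f s) := by
  exact (Complex.continuous_exp.comp (continuous_const.mul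
    (Complex.continuous_ofReal.comp ((continuous_const.sub continuous_id).abs)))).mul hf

lemma aux_int_absker (z : ℂ) (f : ℝ → ℂ) (hf : Continuous f) (hs : HasCompactSupport f) (x : ℝ) :
    Integrable (fun s : ℝ => Complex.exp (Complex.I * z * (|x - s| : ℝ)) * f s) :=
  (aux_cont_absker z f hf x).integrable_of_hasCompactSupport hs.mul_left

lemma aux_split (z : ℂ) (f : ℝ → ℂ) (hf : Continuous f) (hs : HasCompactSupport f)
    (x : ℝ) (hx : 0 ≤ x) :
    (∫ s in Ioi (0:ℝ), Complex.exp (Complex.I * z * (|x - s| : ℝ)) * f s)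
      = Complex.exp (Complex.I*z*x) * auxA z f x
        + Complex.exp (-(Complex.I*z)*x) * auxB z f x := by
  have hint := aux_int_absker z f hf hs x
  have hsplit : (Ioc (0:ℝ) x) ∪ Ioi x = Ioi (0:ℝ) := Ioc_union_Ioi_eq_Ioi hx
  have hU := setIntegral_union (μ := volume)
    (f := fun s : ℝ => Complex.exp (Complex.I * z * (|x - s| : ℝ)) * f s)
    (Ioc_disjoint_Ioi le_rfl) measurableSet_Ioi (hint.integrableOn (s := Ioc 0 x))
    (hint.integrableOn (s := Ioi x))
  rw [hsplit] at hU
  rw [hU]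
  have h1 : ∫ s in Ioc (0:ℝ) x, Complex.exp (Complex.I * z * (|x - s| : ℝ)) * f s
      = Complex.exp (Complex.I*z*x) * auxA z f x := by
    unfold auxA
    rw [intervalIntegral.integral_of_le hx, ← integral_const_mul]
    refine setIntegral_congr_fun measurableSet_Ioc (fun s hs' => ?_)
    have habs : |x - s| = x - s := abs_of_nonneg (by linarith [hs'.2])
    rw [habs, ← mul_assoc, ← Complex.exp_add]
    push_cast
    ring_nf
  have h2 : ∫ s in Ioi x, Complex.exp (Complex.I * z * (|x - s| : ℝ)) * f s
      = Complex.exp (-(Complex.I*z)*x) * auxB z f x := by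
    unfold auxB
    rw [← integral_const_mul]
    refine setIntegral_congr_fun measurableSet_Ioi (fun s hs' => ?_)
    have habs : |x - s| = s - x := by
      rw [abs_of_nonpos (by simp at hs' ⊢; linarith)]; ring
    rw [habs, ← mul_assoc, ← Complex.exp_add]
    push_cast
    ring_nf
  rw [h1, h2]

lemma aux_plus (z : ℂ) (f : ℝ → ℂ) (x : ℝ) :
    (∫ s in Ioi (0:ℝ), Complex.exp (Complex.I * z * ((x:ℂ) + (s:ℂ))) * f s)
      = Complex.exp (Complex.I*z*x) * auxB z f 0 := by
  unfold auxB
  rw [← integral_const_mul]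
  refine setIntegral_congr_fun measurableSet_Ioi (fun s _ => ?_)
  rw [← mul_assoc, ← Complex.exp_add]
  ring_nf

lemma aux_u_eq_U (z : ℂ) (f : ℝ → ℂ) (hf : Continuous f) (hs : HasCompactSupport f)
    (x : ℝ) (hx : 0 ≤ x) :
    (Complex.I / (2 * z)) * ∫ s in Ioi (0:ℝ),
        (Complex.exp (Complex.I * z * ((x:ℂ) + (s:ℂ)))
          + Complex.exp (Complex.I * z * ((|x - s| : ℝ) : ℂ))) * f s
      = auxU z f x := by
  have hi1 : Integrable (fun s : ℝ => Complex.exp (Complex.I * z * ((x:ℂ) + (s:ℂ))) * f s)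
      (volume.restrict (Ioi 0)) := by
    have : Continuous (fun s : ℝ => Complex.exp (Complex.I * z * ((x:ℂ) + (s:ℂ))) * f s) :=
      (Complex.continuous_exp.comp (continuous_const.mul
        (continuous_const.add Complex.continuous_ofReal))).mul hf
    exact (this.integrable_of_hasCompactSupport hs.mul_left).integrableOn
  have hi2 := (aux_int_absker z f hf hs x).integrableOn (s := Ioi (0:ℝ))
  have hadd : ∫ s in Ioi (0:ℝ),
      (Complex.exp (Complex.I * z * ((x:ℂ) + (s:ℂ)))
        + Complex.exp (Complex.I * z * ((|x - s| : ℝ) : ℂ))) * f s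
      = (∫ s in Ioi (0:ℝ), Complex.exp (Complex.I * z * ((x:ℂ) + (s:ℂ))) * f s)
        + ∫ s in Ioi (0:ℝ), Complex.exp (Complex.I * z * ((|x - s| : ℝ) : ℂ)) * f s := by
    rw [← integral_add hi1 hi2]
    congr 1; funext s; ring
  rw [hadd, aux_plus, aux_split z f hf hs x hx]
  unfold auxU
  ring

lemma aux_u_eq_W (z : ℂ) (f : ℝ → ℂ) (hf : Continuous f) (hs : HasCompactSupport f)
    (x : ℝ) (hx : x ≤ 0) :
    (Complex.I / (2 * z)) * ∫ s in Ioi (0:ℝ),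
        (Complex.exp (Complex.I * z * ((x:ℂ) + (s:ℂ)))
          + Complex.exp (Complex.I * z * ((|x - s| : ℝ) : ℂ))) * f s
      = (Complex.I / (2 * z)) * (Complex.exp (Complex.I*z*x)
          + Complex.exp (-(Complex.I*z)*x)) * auxB z f 0 := by
  have hcong : ∫ s in Ioi (0:ℝ),
      (Complex.exp (Complex.I * z * ((x:ℂ) + (s:ℂ)))
        + Complex.exp (Complex.I * z * ((|x - s| : ℝ) : ℂ))) * f s
      = ∫ s in Ioi (0:ℝ), (Complex.exp (Complex.I*z*x)
          + Complex.exp (-(Complex.I*z)*x)) * (Complex.exp (Complex.I*z*s) * f s) := by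
    refine setIntegral_congr_fun measurableSet_Ioi (fun s hs' => ?_)
    have habs : |x - s| = s - x := by
      rw [abs_of_nonpos (by simp at hs' ⊢; linarith)]; ring
    rw [habs]
    push_cast
    rw [show Complex.I * z * ((x:ℂ) + s) = Complex.I*z*x + Complex.I*z*s by ring,
      show Complex.I * z * ((s:ℂ) - x) = -(Complex.I*z)*x + Complex.I*z*s by ring,
      Complex.exp_add, Complex.exp_add]
    ring
  rw [hcong, integral_const_mul]
  unfold auxB
  ring

lemma aux_B_zero (z : ℂ) (f : ℝ → ℂ) (R : ℝ) (hR : ∀ t, R ≤ t → f t = 0)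
    (x : ℝ) (hx : R ≤ x) : auxB z f x = 0 := by
  unfold auxB
  have h0 : EqOn (fun t : ℝ => Complex.exp (Complex.I*z*t) * f t) (fun _ => (0:ℂ)) (Ioi x) :=
    fun t ht => by simp only; rw [hR t (le_trans hx (le_of_lt ht)), mul_zero]
  rw [setIntegral_congr_fun measurableSet_Ioi h0, integral_zero]

lemma aux_A_const (z : ℂ) (f : ℝ → ℂ) (hf : Continuous f) (R : ℝ)
    (hR : ∀ t, R ≤ t → f t = 0) (x : ℝ) (hx : R ≤ x) : auxA z f x = auxA z f R := by
  unfold auxA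
  have hadd := intervalIntegral.integral_add_adjacent_intervals
    (a := (0:ℝ)) (b := R) (c := x) (μ := volume)
    (f := fun t => Complex.exp (-(Complex.I*z)*t) * f t)
    ((aux_cont_ker _ f hf).intervalIntegrable _ _)
    ((aux_cont_ker _ f hf).intervalIntegrable _ _)
  have hzero : ∫ t in R..x, Complex.exp (-(Complex.I*z)*t) * f t = 0 := by
    rw [intervalIntegral.integral_of_le hx]
    have h0 : EqOn (fun t : ℝ => Complex.exp (-(Complex.I*z)*t) * f t) (fun _ => (0:ℂ)) (Ioc R x) :=
      fun t ht => by simp only; rw [hR t (le_of_lt ht.1), mul_zero]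
    rw [setIntegral_congr_fun measurableSet_Ioc h0, integral_zero]
  rw [← hadd, hzero, add_zero]

lemma aux_U_tail (z : ℂ) (f : ℝ → ℂ) (hf : Continuous f) (R : ℝ)
    (hR : ∀ t, R ≤ t → f t = 0) (x : ℝ) (hx : R ≤ x) :
    auxU z f x = (Complex.I/(2*z)) * (auxB z f 0 + auxA z f R) * Complex.exp (Complex.I*z*x) := by
  unfold auxU
  rw [aux_B_zero z f R hR x hx, aux_A_const z f hf R hR x hx]
  ring

lemma aux_A_cont (z : ℂ) (f : ℝ → ℂ) (hf : Continuous f) : Continuous (auxA z f) := by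
  have : ∀ x : ℝ, HasDerivAt (auxA z f) (Complex.exp (-(Complex.I*z)*x) * f x) x :=
    aux_A_deriv z f hf
  exact continuous_iff_continuousAt.2 fun x => (this x).continuousAt

lemma aux_B_cont (z : ℂ) (f : ℝ → ℂ) (hf : Continuous f) (hs : HasCompactSupport f) :
    Continuous (auxB z f) :=
  continuous_iff_continuousAt.2 fun x => (aux_B_deriv z f hf hs x).continuousAt

lemma aux_U_cont (z : ℂ) (f : ℝ → ℂ) (hf : Continuous f) (hs : HasCompactSupport f) :
    Continuous (auxU z f) :=
  continuous_iff_continuousAt.2 fun x => (aux_U_deriv z f hf hs x).continuousAt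

lemma aux_V_cont (z : ℂ) (hz : z ≠ 0) (f : ℝ → ℂ) (hf : Continuous f)
    (hs : HasCompactSupport f) : Continuous (auxV z f) :=
  continuous_iff_continuousAt.2 fun x => (aux_V_deriv z hz f hf hs x).continuousAt

lemma aux_bound (f : ℝ → ℂ) (hs : HasCompactSupport f) :
    ∃ R : ℝ, 0 ≤ R ∧ ∀ t, R ≤ t → f t = 0 := by
  obtain ⟨R₀, hR₀⟩ := hs.isCompact.bddAbove
  refine ⟨max R₀ 0 + 1, by positivity, fun t ht => ?_⟩
  by_contra hft
  have : t ∈ tsupport f := subset_closure (by simpa [Function.mem_support] using hft)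
  have := hR₀ this
  have : R₀ ≤ max R₀ 0 := le_max_left _ _
  linarith [le_max_left R₀ 0]

lemma aux_U_memLp (z : ℂ) (hzim : 0 < z.im) (f : ℝ → ℂ) (hf : Continuous f)
    (hs : HasCompactSupport f) :
    MemLp (auxU z f) 2 (volume.restrict (Ici (0:ℝ))) := by
  obtain ⟨R, hR0, hR⟩ := aux_bound f hs
  have hcont := aux_U_cont z f hf hs
  rw [memLp_two_iff_integrable_sq_norm (hcont.aestronglyMeasurable.restrict)]
  have : IntegrableOn (fun x => ‖auxU z f x‖ ^ 2) (Ici (0:ℝ)) := by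
    rw [← Icc_union_Ioi_eq_Ici hR0]
    apply IntegrableOn.union
    · exact ((hcont.norm.pow 2).continuousOn).integrableOn_Icc
    · set K : ℝ := ‖(Complex.I/(2*z)) * (auxB z f 0 + auxA z f R)‖ ^ 2 with hK
      have hint : IntegrableOn (fun x => K * Real.exp (-(2*z.im) * x)) (Ioi R) :=
        (exp_neg_integrableOn_Ioi R (by linarith)).const_mul _
      refine hint.congr_fun (fun x hx => ?_) measurableSet_Ioi
      have hx' : R ≤ x := le_of_lt hx
      rw [aux_U_tail z f hf R hR x hx', norm_mul, aux_norm_exp, mul_pow, ← Real.exp_nat_mul]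
      simp only [hK]
      ring_nf
  exact this

lemma aux_V_zero (z : ℂ) (f : ℝ → ℂ) : auxV z f 0 = 0 := by
  unfold auxV auxA
  simp [intervalIntegral.integral_same]


/-- For `λ = z²` with `Im z > 0` and `f` smooth compactly supported on `[0,∞)`,
the explicit formula `u` is the unique `L²` solution of `-u'' - λu = f` on `(0,∞)` with the
Neumann condition `u'(0) = 0` (uniqueness among twice continuously differentiable functions
on `[0,∞)` that are square integrable there). -/
theorem neumann_resolvent_formula_unique
    (lam z : ℂ) (hz2 : z ^ 2 = lam) (hzim : 0 < z.im)
    (f : ℝ → ℂ) (hf : ContDiff ℝ (⊤ : ℕ∞) f) (hsupp : HasCompactSupport f)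
    (u : ℝ → ℂ)
    (hu : ∀ x : ℝ, u x = (Complex.I / (2 * z)) *
      ∫ s in Ioi (0 : ℝ), (Complex.exp (Complex.I * z * ((x : ℂ) + (s : ℂ)))
        + Complex.exp (Complex.I * z * ((|x - s| : ℝ) : ℂ))) * f s) :
    ((∀ x ∈ Ioi (0 : ℝ), -(iteratedDeriv 2 u x) - lam * u x = f x) ∧
      deriv u 0 = 0 ∧
      MemLp u 2 (volume.restrict (Ici (0 : ℝ)))) ∧
    (∀ v : ℝ → ℂ,
      ContDiffOn ℝ 2 v (Ici (0 : ℝ)) →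
      (∀ x ∈ Ioi (0 : ℝ), -(iteratedDerivWithin 2 v (Ici (0 : ℝ)) x) - lam * v x = f x) →
      derivWithin v (Ici (0 : ℝ)) 0 = 0 →
      MemLp v 2 (volume.restrict (Ici (0 : ℝ))) →
      EqOn v u (Ici (0 : ℝ))) := by
  have hz0 : z ≠ 0 := fun h => by simp [h] at hzim
  have hfc : Continuous f := hf.continuous
  subst hz2
  -- u agrees with auxU on Ici 0
  have huU : EqOn u (auxU z f) (Ici (0:ℝ)) := fun x hx => by
    rw [hu x]; exact aux_u_eq_U z f hfc hsupp x hx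
  -- u agrees with the cosine formula on Iic 0
  have huW : ∀ x ∈ Iic (0:ℝ), u x = (Complex.I / (2 * z)) * (Complex.exp (Complex.I*z*x)
      + Complex.exp (-(Complex.I*z)*x)) * auxB z f 0 := fun x hx => by
    rw [hu x]; exact aux_u_eq_W z f hfc hsupp x hx
  have hMem : MemLp u 2 (volume.restrict (Ici (0:ℝ))) := by
    have hae : auxU z f =ᵐ[volume.restrict (Ici (0:ℝ))] u := by
      filter_upwards [ae_restrict_mem measurableSet_Ici] with x hx
      exact (huU hx).symm
    exact (aux_U_memLp z hzim f hfc hsupp).ae_eq hae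
  constructor
  · refine ⟨?_, ?_, hMem⟩
    · -- the ODE on Ioi 0
      intro x hx
      have hx' : (0:ℝ) < x := hx
      have hnhds : Ici (0:ℝ) ∈ 𝓝 x := Ici_mem_nhds hx'
      have hev : u =ᶠ[𝓝 x] auxU z f := Filter.eventuallyEq_of_mem hnhds huU
      have h2 : iteratedDeriv 2 u x = deriv (deriv u) x := by
        rw [iteratedDeriv_succ, iteratedDeriv_succ, iteratedDeriv_zero]
      have h3 : deriv (deriv u) x = deriv (deriv (auxU z f)) x :=
        (hev.deriv).deriv_eq
      have h4 : deriv (auxU z f) = auxV z f :=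
        funext fun y => (aux_U_deriv z f hfc hsupp y).deriv
      have h5 : deriv (auxV z f) x = -z^2 * auxU z f x - f x :=
        (aux_V_deriv z hz0 f hfc hsupp x).deriv
      rw [h2, h3, h4, h5, huU (le_of_lt hx')]
      ring
    · -- Neumann condition at 0
      have hIci : HasDerivWithinAt u 0 (Ici (0:ℝ)) 0 := by
        have h := (aux_U_deriv z f hfc hsupp 0).hasDerivWithinAt (s := Ici (0:ℝ))
        rw [aux_V_zero z f] at h
        exact h.congr (fun y hy => huU hy) (huU (Set.mem_Ici.mpr (le_refl 0)))
      have hIic : HasDerivWithinAt u 0 (Iic (0:ℝ)) 0 := by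
        have hW : HasDerivAt (fun x : ℝ => (Complex.I / (2 * z)) * (Complex.exp (Complex.I*z*x)
            + Complex.exp (-(Complex.I*z)*x)) * auxB z f 0)
            (((Complex.I / (2 * z)) * ((Complex.I*z) * Complex.exp (Complex.I*z*(0:ℝ))
              + (-(Complex.I*z)) * Complex.exp (-(Complex.I*z)*(0:ℝ)))) * auxB z f 0) 0 := by
          exact (((aux_exp_deriv (Complex.I*z) 0).add
            (aux_exp_deriv (-(Complex.I*z)) 0)).const_mul (Complex.I / (2*z))).mul_const _
        have hzero : ((Complex.I / (2 * z)) * ((Complex.I*z) * Complex.exp (Complex.I*z*(0:ℝ))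
            + (-(Complex.I*z)) * Complex.exp (-(Complex.I*z)*(0:ℝ)))) * auxB z f 0 = 0 := by
          simp
        rw [hzero] at hW
        exact hW.hasDerivWithinAt.congr (fun y hy => huW y hy) (huW 0 (Set.mem_Iic.mpr (le_refl 0)))
      have := hIic.union hIci
      rw [Iic_union_Ici] at this
      rw [hasDerivWithinAt_univ] at this
      exact this.deriv
  · -- uniqueness
    intro v hv hveq hv0 hvL2
    have hvIoi : ContDiffOn ℝ 2 v (Ioi (0:ℝ)) := hv.mono Ioi_subset_Ici_self
    have hdv : DifferentiableOn ℝ v (Ioi (0:ℝ)) := hvIoi.differentiableOn (by norm_num)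
    have hvderiv : ContDiffOn ℝ 1 (deriv v) (Ioi (0:ℝ)) := by
      have h := (contDiffOn_succ_iff_deriv_of_isOpen (n := 1) isOpen_Ioi).1
        (by exact_mod_cast hvIoi)
      exact h.2.2
    have hdv2 : DifferentiableOn ℝ (deriv v) (Ioi (0:ℝ)) := hvderiv.differentiableOn one_ne_zero
    have hva : ∀ x ∈ Ioi (0:ℝ), HasDerivAt v (deriv v x) x := fun x hx =>
      (hdv.differentiableAt (isOpen_Ioi.mem_nhds hx)).hasDerivAt
    have hva2 : ∀ x ∈ Ioi (0:ℝ), HasDerivAt (deriv v) (deriv (deriv v) x) x := fun x hx =>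
      (hdv2.differentiableAt (isOpen_Ioi.mem_nhds hx)).hasDerivAt
    have hiter : ∀ x ∈ Ioi (0:ℝ), iteratedDerivWithin 2 v (Ici (0:ℝ)) x
        = deriv (deriv v) x := by
      intro x hx
      have hx' : (0:ℝ) < x := hx
      have hmem : x ∈ Ici (0:ℝ) := le_of_lt hx'
      rw [iteratedDerivWithin_succ,
        derivWithin_of_mem_nhds (Ici_mem_nhds hx')]
      apply Filter.EventuallyEq.deriv_eq
      filter_upwards [Ioi_mem_nhds hx'] with y hy
      rw [iteratedDerivWithin_one]
      exact derivWithin_of_mem_nhds (Ici_mem_nhds hy)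
    have hode : ∀ x ∈ Ioi (0:ℝ), deriv (deriv v) x = -z^2 * v x - f x := by
      intro x hx
      have h := hveq x hx
      rw [hiter x hx] at h
      linear_combination -h
    set P : ℝ → ℂ := fun x => (deriv v x - auxV z f x - (Complex.I*z)*(v x - auxU z f x))
        * Complex.exp ((Complex.I*z)*x) with hPdef
    set Q : ℝ → ℂ := fun x => (deriv v x - auxV z f x + (Complex.I*z)*(v x - auxU z f x))
        * Complex.exp (-(Complex.I*z)*x) with hQdef
    have e2 : Complex.I * Complex.I = -1 := Complex.I_mul_I
    have hPd : ∀ x ∈ Ioi (0:ℝ), HasDerivAt P 0 x := by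
      intro x hx
      have h := (((hva2 x hx).sub (aux_V_deriv z hz0 f hfc hsupp x)).sub
        (((hva x hx).sub (aux_U_deriv z f hfc hsupp x)).const_mul (Complex.I*z))).mul
        (aux_exp_deriv (Complex.I*z) x)
      refine h.congr_deriv ?_
      symm
      simp only [Pi.sub_apply, Pi.add_apply]
      rw [hode x hx]
      linear_combination (Complex.exp ((Complex.I*z)*x) * z^2 * (v x - auxU z f x)) * e2
    have hQd : ∀ x ∈ Ioi (0:ℝ), HasDerivAt Q 0 x := by
      intro x hx
      have h := (((hva2 x hx).sub (aux_V_deriv z hz0 f hfc hsupp x)).add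
        (((hva x hx).sub (aux_U_deriv z f hfc hsupp x)).const_mul (Complex.I*z))).mul
        (aux_exp_deriv (-(Complex.I*z)) x)
      refine h.congr_deriv ?_
      symm
      simp only [Pi.sub_apply, Pi.add_apply]
      rw [hode x hx]
      linear_combination (Complex.exp (-(Complex.I*z)*x) * z^2 * (v x - auxU z f x)) * e2
    have h1mem : (1:ℝ) ∈ Ioi (0:ℝ) := mem_Ioi.mpr one_pos
    set K : ℂ := P 1 with hKdef
    set L : ℂ := Q 1 with hLdef
    have hPx : ∀ x ∈ Ioi (0:ℝ), deriv v x - auxV z f x - (Complex.I*z)*(v x - auxU z f x)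
        = K * Complex.exp (-(Complex.I*z)*x) := by
      intro x hx
      have hP1 : P x = K := aux_const_Ioi P hPd x hx 1 h1mem
      rw [hPdef] at hP1
      simp only at hP1
      have hee : Complex.exp ((Complex.I*z)*x) * Complex.exp (-(Complex.I*z)*x) = 1 := by
        rw [← Complex.exp_add, show (Complex.I*z)*(x:ℂ) + -(Complex.I*z)*(x:ℂ) = 0 by ring,
          Complex.exp_zero]
      linear_combination Complex.exp (-(Complex.I*z)*x) * hP1
        - (deriv v x - auxV z f x - (Complex.I*z)*(v x - auxU z f x)) * hee
    have hQx : ∀ x ∈ Ioi (0:ℝ), deriv v x - auxV z f x + (Complex.I*z)*(v x - auxU z f x)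
        = L * Complex.exp ((Complex.I*z)*x) := by
      intro x hx
      have hQ1 : Q x = L := aux_const_Ioi Q hQd x hx 1 h1mem
      rw [hQdef] at hQ1
      simp only at hQ1
      have hee : Complex.exp ((Complex.I*z)*x) * Complex.exp (-(Complex.I*z)*x) = 1 := by
        rw [← Complex.exp_add, show (Complex.I*z)*(x:ℂ) + -(Complex.I*z)*(x:ℂ) = 0 by ring,
          Complex.exp_zero]
      linear_combination Complex.exp ((Complex.I*z)*x) * hQ1
        - (deriv v x - auxV z f x + (Complex.I*z)*(v x - auxU z f x)) * hee
    have h2Iz : (2*Complex.I*z) ≠ 0 := by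
      simp [Complex.I_ne_zero, hz0]
    have hw : ∀ x ∈ Ioi (0:ℝ), v x - auxU z f x
        = (2*Complex.I*z)⁻¹ * (L * Complex.exp ((Complex.I*z)*x)
            - K * Complex.exp (-(Complex.I*z)*x)) := by
      intro x hx
      have h1 := hPx x hx
      have h2 := hQx x hx
      rw [inv_mul_eq_div, eq_div_iff h2Iz]
      linear_combination h2 - h1
    -- K = 0 from square integrability
    have h0sing : (volume.restrict (Ici (0:ℝ))) {(0:ℝ)} = 0 := by
      rw [Measure.restrict_apply (measurableSet_singleton 0)]
      exact measure_mono_null inter_subset_left Real.volume_singleton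
    have hne : ∀ᵐ x ∂(volume.restrict (Ici (0:ℝ))), x ≠ 0 := by
      rw [ae_iff]
      convert h0sing using 2
      simp
    have h0ae : ∀ᵐ x ∂(volume.restrict (Ici (0:ℝ))), x ∈ Ioi (0:ℝ) := by
      filter_upwards [ae_restrict_mem measurableSet_Ici, hne] with x h1 h2
      exact lt_of_le_of_ne h1 (Ne.symm h2)
    have hwmem : MemLp (fun x => v x - auxU z f x) 2 (volume.restrict (Ici (0:ℝ))) := by
      refine (hvL2.sub hMem).ae_eq ?_
      filter_upwards [ae_restrict_mem measurableSet_Ici] with x hx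
      simp only [Pi.sub_apply]
      rw [huU hx]
    have hgmem : MemLp (fun x : ℝ => (2*Complex.I*z)⁻¹ * (L * Complex.exp ((Complex.I*z)*x)
        - K * Complex.exp (-(Complex.I*z)*x))) 2 (volume.restrict (Ici (0:ℝ))) := by
      refine hwmem.ae_eq ?_
      filter_upwards [h0ae] with x hx
      exact hw x hx
    have hL1 := aux_memLp_exp z hzim ((2*Complex.I*z)⁻¹ * L)
    have hdiff := hgmem.sub hL1
    have hKexp : MemLp (fun x : ℝ => (-((2*Complex.I*z)⁻¹ * K)) * Complex.exp (-(Complex.I*z)*x))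
        2 (volume.restrict (Ici (0:ℝ))) := by
      refine hdiff.ae_eq (ae_of_all _ fun x => ?_)
      simp only [Pi.sub_apply]
      ring_nf
    have hK0 : -((2*Complex.I*z)⁻¹ * K) = 0 := aux_not_memLp z hzim _ hKexp
    have hK : K = 0 := by
      field_simp at hK0
      simpa using hK0
    -- L = 0 from the boundary condition
    have hVcont := aux_V_cont z hz0 f hfc hsupp
    have hdvw : ContinuousOn (derivWithin v (Ici (0:ℝ))) (Ici (0:ℝ)) :=
      hv.continuousOn_derivWithin (uniqueDiffOn_Ici 0) (by norm_num)
    have h0mem : (0:ℝ) ∈ Ici (0:ℝ) := mem_Ici.mpr le_rfl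
    have htend1 : Tendsto (fun x => derivWithin v (Ici (0:ℝ)) x - auxV z f x)
        (𝓝[>] (0:ℝ)) (𝓝 0) := by
      have h1 : ContinuousWithinAt (fun x => derivWithin v (Ici (0:ℝ)) x - auxV z f x)
          (Ici (0:ℝ)) 0 := (hdvw 0 h0mem).sub (hVcont.continuousWithinAt)
      have h2 := h1.tendsto
      rw [hv0, aux_V_zero z f, sub_zero] at h2
      exact h2.mono_left (nhdsWithin_mono 0 Ioi_subset_Ici_self)
    have htend2 : Tendsto (fun x => derivWithin v (Ici (0:ℝ)) x - auxV z f x)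
        (𝓝[>] (0:ℝ)) (𝓝 (L/2)) := by
      have hc : Tendsto (fun x : ℝ => L/2 * Complex.exp ((Complex.I*z)*x))
          (𝓝[>] (0:ℝ)) (𝓝 (L/2)) := by
        have : ContinuousAt (fun x : ℝ => L/2 * Complex.exp ((Complex.I*z)*x)) 0 := by
          apply Continuous.continuousAt
          exact continuous_const.mul (Complex.continuous_exp.comp
            (continuous_const.mul Complex.continuous_ofReal))
        have h := this.continuousWithinAt (s := Ioi (0:ℝ))
        simpa using h.tendsto
      refine hc.congr' ?_
      filter_upwards [self_mem_nhdsWithin] with x hx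
      have h1 := hPx x hx
      have h2 := hQx x hx
      rw [hK, zero_mul] at h1
      rw [derivWithin_of_mem_nhds (Ici_mem_nhds hx)]
      linear_combination -(h1 + h2) / 2
    have hL : L = 0 := by
      have := tendsto_nhds_unique htend2 htend1
      field_simp at this
      simpa using this
    have hzero : ∀ x ∈ Ioi (0:ℝ), v x = auxU z f x := by
      intro x hx
      have h := hw x hx
      rw [hK, hL] at h
      simp at h
      linear_combination h
    -- value at 0 by continuity
    have hv00 : v 0 = auxU z f 0 := by
      have hvc : ContinuousWithinAt v (Ici (0:ℝ)) 0 := (hv.continuousOn) 0 h0mem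
      have hUc : ContinuousWithinAt (auxU z f) (Ici (0:ℝ)) 0 :=
        (aux_U_cont z f hfc hsupp).continuousWithinAt
      have ht : Tendsto (fun x => v x - auxU z f x) (𝓝[>] (0:ℝ)) (𝓝 (v 0 - auxU z f 0)) :=
        ((hvc.sub hUc).tendsto).mono_left (nhdsWithin_mono 0 Ioi_subset_Ici_self)
      have ht0 : Tendsto (fun x => v x - auxU z f x) (𝓝[>] (0:ℝ)) (𝓝 0) := by
        refine Tendsto.congr' ?_ tendsto_const_nhds
        filter_upwards [self_mem_nhdsWithin] with x hx
        rw [hzero x hx, sub_self]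
      have := tendsto_nhds_unique ht ht0
      exact sub_eq_zero.mp this
    intro x hx
    rcases eq_or_lt_of_le (mem_Ici.mp hx) with h | h
    · rw [← h, hv00, huU h0mem]
    · rw [hzero x h, huU hx]
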